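/- For every n ≥ 2, the QBF P_n.(φ_n ∧ ψ_n), where P_n.φ_n = QUPARITY_n and ψ_n = (x̄_1∨x_2) ∧ x̄_2 ∧ … ∧ x̄_n, has a Q-Res refutation of length at most 2n+1 (counting R and U steps). -/

import Mathlib

/-! Generic framework for QBFs in prenex CNF. -/

inductive Q
  | ex
  | all
deriving DecidableEq

abbrev Lit (V : Type) := V × Bool
abbrev Clause (V : Type) := Finset (Lit V)
abbrev Cnf (V : Type) := Finset (Clause V)
abbrev QPrefix (V : Type) := List (Q × V)

variable {V : Type} [DecidableEq V]

/-- Negation of a literal. -/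
def negLit (l : Lit V) : Lit V := (l.1, !l.2)

/-- Evaluation of a literal under an assignment. -/
def evalLit (τ : V → Bool) (l : Lit V) : Bool := if l.2 then τ l.1 else !(τ l.1)

/-- An assignment satisfies a clause if some literal evaluates to true. -/
def SatClause (τ : V → Bool) (C : Clause V) : Prop := ∃ l ∈ C, evalLit τ l = true

/-- An assignment satisfies a CNF if it satisfies all clauses. -/
def SatCnf (τ : V → Bool) (φ : Cnf V) : Prop := ∀ C ∈ φ, SatClause τ C

/-- Recursive semantics of a quantifier prefix over a matrix predicate. -/
def QTrue : QPrefix V → (V → Bool) → ((V → Bool) → Prop) → Prop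
  | [], τ, M => M τ
  | (Q.ex, v) :: P, τ, M => ∃ b, QTrue P (Function.update τ v b) M
  | (Q.all, v) :: P, τ, M => ∀ b, QTrue P (Function.update τ v b) M

/-- Truth of a prenex CNF QBF (closed; the default assignment is irrelevant). -/
def QBFTrue (P : QPrefix V) (φ : Cnf V) : Prop :=
  QTrue P (fun _ => false) (fun τ => SatCnf τ φ)

/-- Two variables are in the same quantifier block of a prefix. -/
def SameBlock (P : QPrefix V) (v w : V) : Prop :=
  ∃ i j : ℕ, (∃ q : Q, P[i]? = some (q, v)) ∧ (∃ q : Q, P[j]? = some (q, w)) ∧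
    ∀ (k₁ k₂ : ℕ) (e₁ e₂ : Q × V), min i j ≤ k₁ → k₁ ≤ k₂ → k₂ ≤ max i j →
      P[k₁]? = some e₁ → P[k₂]? = some e₂ → e₁.1 = e₂.1

/-- An admissible literal map for a prefix: a bijection on literals commuting with
negation and moving variables only within their quantifier block. -/
structure Admissible (P : QPrefix V) (σ : Lit V → Lit V) : Prop where
  bij : Function.Bijective σ
  neg : ∀ l, σ (negLit l) = negLit (σ l)
  block : ∀ v w b c, σ (v, b) = (w, c) → v ≠ w → SameBlock P v w

/-- Action of a literal map on a clause. -/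
def mapClause (σ : Lit V → Lit V) (C : Clause V) : Clause V := C.image σ

/-- A (syntactic) symmetry of a QBF: an admissible map sending the clause set to itself. -/
def IsSymmetry (P : QPrefix V) (φ : Cnf V) (σ : Lit V → Lit V) : Prop :=
  Admissible P σ ∧ φ.image (mapClause σ) = φ

def IsExist (P : QPrefix V) (v : V) : Prop := (Q.ex, v) ∈ P
def IsUniv (P : QPrefix V) (v : V) : Prop := (Q.all, v) ∈ P

/-- A clause is a tautology if it contains complementary literals. -/
def Tauto (C : Clause V) : Prop := ∃ l ∈ C, negLit l ∈ C

/-- Rule R of Q-Res: resolution over an existential variable, with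
non-tautological resolvent. -/
def ResStep (P : QPrefix V) (E₁ E₂ E : Clause V) : Prop :=
  ∃ x, IsExist P x ∧ (x, true) ∈ E₁ ∧ (x, false) ∈ E₂ ∧
    E = E₁.erase (x, true) ∪ E₂.erase (x, false) ∧ ¬ Tauto E

/-- Prefix order on variables: `v` occurs strictly before `w`. -/
def LtP (P : QPrefix V) (v w : V) : Prop :=
  ∃ i j : ℕ, i < j ∧ (∃ q : Q, P[i]? = some (q, v)) ∧ (∃ q : Q, P[j]? = some (q, w))

/-- Rule U of Q-Res: universal reduction. -/
def URed (P : QPrefix V) (F₁ F : Clause V) : Prop :=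
  ∃ l, IsUniv P l.1 ∧ l ∈ F₁ ∧ negLit l ∉ F₁ ∧ F = F₁.erase l ∧
    ∀ k ∈ F₁.erase l, IsExist P k.1 → LtP P k.1 l.1

/-- Derivability in Q-Res (rules A, R, U). -/
inductive Derives (P : QPrefix V) (φ : Cnf V) : Clause V → Prop
  | ax {C : Clause V} : C ∈ φ → Derives P φ C
  | res {E₁ E₂ E : Clause V} :
      Derives P φ E₁ → Derives P φ E₂ → ResStep P E₁ E₂ E → Derives P φ E
  | ured {F₁ F : Clause V} : Derives P φ F₁ → URed P F₁ F → Derives P φ F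

/-- Derivability in Q-Res+S (rules A, R, U, S). -/
inductive DerivesS (P : QPrefix V) (φ : Cnf V) : Clause V → Prop
  | ax {C : Clause V} : C ∈ φ → DerivesS P φ C
  | res {E₁ E₂ E : Clause V} :
      DerivesS P φ E₁ → DerivesS P φ E₂ → ResStep P E₁ E₂ E → DerivesS P φ E
  | ured {F₁ F : Clause V} : DerivesS P φ F₁ → URed P F₁ F → DerivesS P φ F
  | sym {C : Clause V} {σ : Lit V → Lit V} :
      DerivesS P φ C → IsSymmetry P φ σ → DerivesS P φ (mapClause σ C)

/-- A clause available at step `i` of a derivation sequence: an input clause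
(axiom rule A, not counted as a step) or an earlier line. -/
def Avail (φ : Cnf V) (D : List (Clause V)) (i : ℕ) (C : Clause V) : Prop :=
  C ∈ φ ∨ ∃ j, ∃ _ : j < i, ∃ hj : j < D.length, D[j]'hj = C

/-- Line `C` at position `i` is justified by rule R or U from available clauses. -/
def StepOK (P : QPrefix V) (φ : Cnf V) (D : List (Clause V)) (i : ℕ) (C : Clause V) : Prop :=
  (∃ E₁ E₂, Avail φ D i E₁ ∧ Avail φ D i E₂ ∧ ResStep P E₁ E₂ C) ∨
  (∃ F₁, Avail φ D i F₁ ∧ URed P F₁ C)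

/-- Line justified by rule R, U or the symmetry rule S. -/
def StepOKS (P : QPrefix V) (φ : Cnf V) (D : List (Clause V)) (i : ℕ) (C : Clause V) : Prop :=
  StepOK P φ D i C ∨
  (∃ F₁ σ, Avail φ D i F₁ ∧ IsSymmetry P φ σ ∧ C = mapClause σ F₁)

/-- A Q-Res refutation, as a sequence of R/U steps ending in the empty clause;
its length is the number of R and U applications. -/
def IsRefutation (P : QPrefix V) (φ : Cnf V) (D : List (Clause V)) : Prop :=
  (∀ i (hi : i < D.length), StepOK P φ D i (D[i]'hi)) ∧ D.getLast? = some (∅ : Clause V)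

/-- A Q-Res+S refutation. -/
def IsRefutationS (P : QPrefix V) (φ : Cnf V) (D : List (Clause V)) : Prop :=
  (∀ i (hi : i < D.length), StepOKS P φ D i (D[i]'hi)) ∧ D.getLast? = some (∅ : Clause V)

/-- A derivation sequence using rules A, R, U: every line is an input clause or
follows from earlier lines by R or U. -/
def IsDerivation (P : QPrefix V) (φ : Cnf V) (D : List (Clause V)) : Prop :=
  ∀ i (hi : i < D.length), (D[i]'hi) ∈ φ ∨
    (∃ j k, ∃ hj : j < i, ∃ hk : k < i,
      ResStep P (D[j]'(Nat.lt_trans hj hi)) (D[k]'(Nat.lt_trans hk hi)) (D[i]'hi)) ∨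
    (∃ j, ∃ hj : j < i, URed P (D[j]'(Nat.lt_trans hj hi)) (D[i]'hi))

/-! The KBKF formula family (variables indexed 1..n). -/

inductive KV
  | x (i : ℕ)
  | y (i : ℕ)
  | a (i : ℕ)
  | z (i : ℕ)
deriving DecidableEq

/-- Prefix ∃x₁y₁∀a₁ … ∃xₙyₙ∀aₙ ∃z₁…zₙ. -/
def kPrefix (n : ℕ) : QPrefix KV :=
  ((List.range n).flatMap
    (fun j => [(Q.ex, KV.x (j+1)), (Q.ex, KV.y (j+1)), (Q.all, KV.a (j+1))])) ++
  (List.range n).map (fun j => (Q.ex, KV.z (j+1)))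

/-- The tail z̄₁ ∨ … ∨ z̄ₙ. -/
def kZneg (n : ℕ) : Clause KV := (Finset.range n).image (fun j => ((KV.z (j+1), false) : Lit KV))

/-- The clauses of KBKF_n. -/
def kbkf (n : ℕ) : Cnf KV :=
  {({(KV.x 1, false), (KV.y 1, false)} : Clause KV)} ∪
  ((Finset.range (n-1)).image (fun j =>
    ({(KV.x (j+1), true), (KV.a (j+1), false), (KV.x (j+2), false), (KV.y (j+2), false)} : Clause KV))) ∪
  ((Finset.range (n-1)).image (fun j =>
    ({(KV.y (j+1), true), (KV.a (j+1), true), (KV.x (j+2), false), (KV.y (j+2), false)} : Clause KV))) ∪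
  {({(KV.x n, true), (KV.a n, false)} : Clause KV) ∪ kZneg n,
   ({(KV.y n, true), (KV.a n, true)} : Clause KV) ∪ kZneg n} ∪
  ((Finset.range n).image (fun j => ({(KV.a (j+1), true), (KV.z (j+1), true)} : Clause KV))) ∪
  ((Finset.range n).image (fun j => ({(KV.a (j+1), false), (KV.z (j+1), true)} : Clause KV)))

/-- The symmetry σᵢ = (xᵢ yᵢ)(x̄ᵢ ȳᵢ)(aᵢ āᵢ) of KBKF_n. -/
def kSigma (i : ℕ) : Lit KV → Lit KV
  | (KV.x j, b) => if j = i then (KV.y j, b) else (KV.x j, b)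
  | (KV.y j, b) => if j = i then (KV.x j, b) else (KV.y j, b)
  | (KV.a j, b) => if j = i then (KV.a j, !b) else (KV.a j, b)
  | (KV.z j, b) => (KV.z j, b)

/-- The symmetry breaker ψₙ = (x̄₁∨y₁) ∧ … ∧ (x̄ₙ∨yₙ) for KBKF_n. -/
def kPsi (n : ℕ) : Cnf KV :=
  (Finset.range n).image (fun j => ({(KV.x (j+1), false), (KV.y (j+1), true)} : Clause KV))

/-! The QUPARITY formula family. -/

inductive PV
  | x (i : ℕ)
  | a (i : ℕ)
  | y (i : ℕ)
deriving DecidableEq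

/-- Prefix ∃x₁…xₙ ∀a₁a₂ ∃y₂…yₙ. -/
def pPrefix (n : ℕ) : QPrefix PV :=
  (List.range n).map (fun j => ((Q.ex, PV.x (j+1)) : Q × PV)) ++
  [(Q.all, PV.a 1), (Q.all, PV.a 2)] ++
  (List.range (n-1)).map (fun k => ((Q.ex, PV.y (k+2)) : Q × PV))

/-- a₁ ∨ a₂ with sign `s` (s = true: unprimed clauses, s = false: primed clauses). -/
def pAA (s : Bool) : Clause PV := {(PV.a 1, s), (PV.a 2, s)}

/-- The clauses of QUPARITY_n. -/
def quparity (n : ℕ) : Cnf PV :=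
  ((Finset.univ : Finset Bool).biUnion (fun s =>
    ({({(PV.x 1, false), (PV.x 2, false), (PV.y 2, false)} : Clause PV) ∪ pAA s,
      ({(PV.x 1, false), (PV.x 2, true), (PV.y 2, true)} : Clause PV) ∪ pAA s,
      ({(PV.x 1, true), (PV.x 2, false), (PV.y 2, true)} : Clause PV) ∪ pAA s,
      ({(PV.x 1, true), (PV.x 2, true), (PV.y 2, false)} : Clause PV) ∪ pAA s} : Cnf PV) ∪
    ((Finset.range (n-2)).biUnion (fun k =>
      ({({(PV.y (k+2), false), (PV.x (k+3), false), (PV.y (k+3), false)} : Clause PV) ∪ pAA s,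
        ({(PV.y (k+2), false), (PV.x (k+3), true), (PV.y (k+3), true)} : Clause PV) ∪ pAA s,
        ({(PV.y (k+2), true), (PV.x (k+3), false), (PV.y (k+3), true)} : Clause PV) ∪ pAA s,
        ({(PV.y (k+2), true), (PV.x (k+3), true), (PV.y (k+3), false)} : Clause PV) ∪ pAA s} : Cnf PV))))) ∪
  {({(PV.a 1, true), (PV.a 2, true), (PV.y n, true)} : Clause PV),
   ({(PV.a 1, false), (PV.a 2, false), (PV.y n, false)} : Clause PV)}

/-- The symmetry σ₁ = (x₁ x₂)(x̄₁ x̄₂) of QUPARITY_n. -/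
def pSigma1 : Lit PV → Lit PV
  | (PV.x 1, b) => (PV.x 2, b)
  | (PV.x 2, b) => (PV.x 1, b)
  | l => l

/-- The symmetry σᵢ = (xᵢ x̄ᵢ)(a₁ ā₁)(a₂ ā₂)(yᵢ ȳᵢ)⋯(yₙ ȳₙ) of QUPARITY_n, 2 ≤ i ≤ n. -/
def pSigma (n i : ℕ) : Lit PV → Lit PV
  | (PV.x j, b) => if j = i then (PV.x j, !b) else (PV.x j, b)
  | (PV.a j, b) => if j = 1 ∨ j = 2 then (PV.a j, !b) else (PV.a j, b)
  | (PV.y j, b) => if i ≤ j ∧ j ≤ n then (PV.y j, !b) else (PV.y j, b)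

/-- The symmetry breaker ψₙ = (x̄₁ ∨ x₂) ∧ x̄₂ ∧ … ∧ x̄ₙ for QUPARITY_n. -/
def pPsi (n : ℕ) : Cnf PV :=
  {({(PV.x 1, false), (PV.x 2, true)} : Clause PV)} ∪
  (Finset.range (n-1)).image (fun k => ({(PV.x (k+2), false)} : Clause PV))

/-! The modified family KBKF'_n with blocking universal variables b_j. -/

inductive KV2
  | x (i : ℕ)
  | b (i : ℕ)
  | y (i : ℕ)
  | a (i : ℕ)
  | z (i : ℕ)
deriving DecidableEq

/-- Prefix ∃x₁∀b₁∃y₁∀a₁ … ∃xₙ∀bₙ∃yₙ∀aₙ ∃z₁…zₙ of KBKF'_n. -/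
def k2Prefix (n : ℕ) : QPrefix KV2 :=
  ((List.range n).flatMap
    (fun j => [(Q.ex, KV2.x (j+1)), (Q.all, KV2.b (j+1)),
               (Q.ex, KV2.y (j+1)), (Q.all, KV2.a (j+1))])) ++
  (List.range n).map (fun j => (Q.ex, KV2.z (j+1)))

/-- The map σᵢ = (xᵢ yᵢ)(x̄ᵢ ȳᵢ)(aᵢ āᵢ) on the literals of KBKF'_n. -/
def k2Sigma (i : ℕ) : Lit KV2 → Lit KV2
  | (KV2.x j, c) => if j = i then (KV2.y j, c) else (KV2.x j, c)
  | (KV2.y j, c) => if j = i then (KV2.x j, c) else (KV2.y j, c)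
  | (KV2.a j, c) => if j = i then (KV2.a j, !c) else (KV2.a j, c)
  | (KV2.b j, c) => (KV2.b j, c)
  | (KV2.z j, c) => (KV2.z j, c)


/-! With the breaker, the parity chain collapses to unit propagation. Resolving D₂ with
x̄₁ ∨ x₂ on x₁ and then with the unit x̄₂ gives ȳ₂ ∨ a₁ ∨ a₂; for j ≥ 2, resolving D_{j+1} with
ȳⱼ ∨ a₁ ∨ a₂ on yⱼ and then with the unit x̄_{j+1} gives ȳ_{j+1} ∨ a₁ ∨ a₂. These are two steps
per index, 2n − 2 in all. Resolving E₁ with ȳₙ ∨ a₁ ∨ a₂ leaves a₁ ∨ a₂, which two universal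
reductions empty, for 2n + 1 steps. -/

section Refutations

variable {P : QPrefix V} {φ : Cnf V}

omit [DecidableEq V] in
theorem not_tauto_of_injOn {C : Clause V} (h : Set.InjOn Prod.fst (C : Set (Lit V))) :
    ¬ Tauto C := by
  rintro ⟨l, hl, hnl⟩
  have := congrArg Prod.snd (h hnl hl rfl)
  simp [negLit] at this

theorem resStep_insert {x : V} {C₁ C₂ : Clause V} (hx : IsExist P x) (h₁ : (x, true) ∉ C₁)
    (h₂ : (x, false) ∉ C₂) (hC : ¬ Tauto (C₁ ∪ C₂)) :
    ResStep P (insert (x, true) C₁) (insert (x, false) C₂) (C₁ ∪ C₂) :=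
  ⟨x, hx, Finset.mem_insert_self _ _, Finset.mem_insert_self _ _,
    by rw [Finset.erase_insert h₁, Finset.erase_insert h₂], hC⟩

theorem uRed_insert {l : Lit V} {C : Clause V} (hl : IsUniv P l.1) (hlC : l ∉ C)
    (hnC : negLit l ∉ C) (hC : ∀ k ∈ C, ¬ IsExist P k.1) : URed P (insert l C) C := by
  refine ⟨l, hl, Finset.mem_insert_self _ _, ?_, (Finset.erase_insert hlC).symm, ?_⟩
  · rw [Finset.mem_insert, not_or]
    exact ⟨fun h => by simpa [negLit] using congrArg Prod.snd h, hnC⟩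
  · rw [Finset.erase_insert hlC]
    exact fun k hk hex => absurd hex (hC k hk)

omit [DecidableEq V] in
theorem avail_length_iff {D : List (Clause V)} {C : Clause V} :
    Avail φ D D.length C ↔ C ∈ φ ∨ C ∈ D := by
  simp [Avail, List.mem_iff_getElem]

theorem StepOK.append {D D' : List (Clause V)} {i : ℕ} {C : Clause V}
    (h : StepOK P φ D i C) : StepOK P φ (D ++ D') i C := by
  have avail {E} : Avail φ D i E → Avail φ (D ++ D') i E := by
    rintro (hE | ⟨j, hji, hj, rfl⟩)
    · exact Or.inl hE
    · exact Or.inr ⟨j, hji, by simp; omega, List.getElem_append_left hj⟩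
  rcases h with ⟨E₁, E₂, h₁, h₂, hres⟩ | ⟨F, hF, hred⟩
  · exact Or.inl ⟨E₁, E₂, avail h₁, avail h₂, hres⟩
  · exact Or.inr ⟨F, avail hF, hred⟩

def StepsOK (P : QPrefix V) (φ : Cnf V) (D : List (Clause V)) : Prop :=
  ∀ i (hi : i < D.length), StepOK P φ D i (D[i]'hi)

theorem stepsOK_nil : StepsOK P φ [] := fun _ hi => absurd hi (Nat.not_lt_zero _)

theorem StepsOK.snoc {D : List (Clause V)} {C : Clause V} (hD : StepsOK P φ D)
    (hC : StepOK P φ D D.length C) : StepsOK P φ (D ++ [C]) := by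
  intro i hi
  rw [List.length_append, List.length_singleton, Nat.lt_succ_iff] at hi
  rcases hi.lt_or_eq with hi | rfl
  · rw [List.getElem_append_left hi]
    exact (hD i hi).append
  · simpa using hC.append

theorem StepsOK.snoc_res {D : List (Clause V)} {E₁ E₂ C : Clause V} (hD : StepsOK P φ D)
    (h₁ : E₁ ∈ φ ∨ E₁ ∈ D) (h₂ : E₂ ∈ φ ∨ E₂ ∈ D) (h : ResStep P E₁ E₂ C) :
    StepsOK P φ (D ++ [C]) :=
  hD.snoc (Or.inl ⟨E₁, E₂, avail_length_iff.2 h₁, avail_length_iff.2 h₂, h⟩)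

theorem StepsOK.snoc_uRed {D : List (Clause V)} {F C : Clause V} (hD : StepsOK P φ D)
    (hF : F ∈ φ ∨ F ∈ D) (h : URed P F C) : StepsOK P φ (D ++ [C]) :=
  hD.snoc (Or.inr ⟨F, avail_length_iff.2 hF, h⟩)

end Refutations

section Quparity

variable {n : ℕ}

theorem isExist_x {j : ℕ} (hj : 1 ≤ j) (hjn : j ≤ n) : IsExist (pPrefix n) (PV.x j) := by
  simp only [IsExist, pPrefix, List.mem_append, List.mem_map, List.mem_range]
  exact Or.inl (Or.inl ⟨j - 1, by omega, by simp; omega⟩)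

theorem isExist_y {j : ℕ} (hj : 2 ≤ j) (hjn : j ≤ n) : IsExist (pPrefix n) (PV.y j) := by
  simp only [IsExist, pPrefix, List.mem_append, List.mem_map, List.mem_range]
  exact Or.inr ⟨j - 2, by omega, by simp; omega⟩

theorem isUniv_a {i : ℕ} (hi : i = 1 ∨ i = 2) : IsUniv (pPrefix n) (PV.a i) := by
  rcases hi with rfl | rfl <;> simp [IsUniv, pPrefix]

theorem not_isExist_a (i : ℕ) : ¬ IsExist (pPrefix n) (PV.a i) := by
  simp [IsExist, pPrefix]

theorem mem_quparity_D2 :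
    ({(PV.x 1, true), (PV.x 2, true), (PV.y 2, false)} ∪ pAA true : Clause PV) ∈ quparity n := by
  simp only [quparity, Finset.mem_union, Finset.mem_biUnion, Finset.mem_univ]
  exact Or.inl ⟨true, trivial, Or.inl (by simp)⟩

theorem mem_quparity_D {j : ℕ} (hj : 2 ≤ j) (hjn : j + 1 ≤ n) :
    ({(PV.y j, true), (PV.x (j + 1), true), (PV.y (j + 1), false)} ∪ pAA true : Clause PV) ∈
      quparity n := by
  obtain ⟨k, rfl⟩ : ∃ k, j = k + 2 := ⟨j - 2, by omega⟩
  simp only [quparity, Finset.mem_union, Finset.mem_biUnion, Finset.mem_univ, Finset.mem_range]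
  exact Or.inl ⟨true, trivial, Or.inr ⟨k, by omega, by simp⟩⟩

theorem mem_quparity_E1 :
    ({(PV.a 1, true), (PV.a 2, true), (PV.y n, true)} : Clause PV) ∈ quparity n :=
  Finset.mem_union_right _ (Finset.mem_insert_self _ _)

theorem mem_pPsi_x1 : ({(PV.x 1, false), (PV.x 2, true)} : Clause PV) ∈ pPsi n := by
  simp [pPsi]

theorem mem_pPsi_x {j : ℕ} (hj : 2 ≤ j) (hjn : j ≤ n) :
    ({(PV.x j, false)} : Clause PV) ∈ pPsi n := by
  simp only [pPsi, Finset.mem_union, Finset.mem_image, Finset.mem_range, Finset.mem_singleton]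
  exact Or.inr ⟨j - 2, by omega, by simp; omega⟩

theorem resStep_D2 (hn : 2 ≤ n) :
    ResStep (pPrefix n) ({(PV.x 1, true), (PV.x 2, true), (PV.y 2, false)} ∪ pAA true)
      {(PV.x 1, false), (PV.x 2, true)}
      (insert (PV.x 2, true) (insert (PV.y 2, false) (pAA true))) := by
  rw [Finset.insert_union]
  convert resStep_insert (P := pPrefix n)
    (C₁ := {(PV.x 2, true), (PV.y 2, false)} ∪ pAA true) (C₂ := {(PV.x 2, true)})
    (isExist_x le_rfl (by omega)) (by decide) (by decide)
    (not_tauto_of_injOn (by decide)) using 1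
  decide

theorem resStep_psi_x {j : ℕ} (hj : 1 ≤ j) (hjn : j ≤ n) :
    ResStep (pPrefix n) (insert (PV.x j, true) (insert (PV.y j, false) (pAA true)))
      {(PV.x j, false)} (insert (PV.y j, false) (pAA true)) := by
  rw [← Finset.insert_empty]
  simpa using resStep_insert (C₂ := ∅) (isExist_x hj hjn) (by simp [pAA]) (by simp)
    (not_tauto_of_injOn (by simp [Set.InjOn, pAA]))

theorem resStep_D {j : ℕ} (hj : 2 ≤ j) (hjn : j + 1 ≤ n) :
    ResStep (pPrefix n)
      ({(PV.y j, true), (PV.x (j + 1), true), (PV.y (j + 1), false)} ∪ pAA true)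
      (insert (PV.y j, false) (pAA true))
      (insert (PV.x (j + 1), true) (insert (PV.y (j + 1), false) (pAA true))) := by
  rw [Finset.insert_union]
  convert resStep_insert (P := pPrefix n)
    (C₁ := {(PV.x (j + 1), true), (PV.y (j + 1), false)} ∪ pAA true) (C₂ := pAA true)
    (isExist_y hj (by omega)) (by simp [pAA]) (by simp [pAA])
    (not_tauto_of_injOn (by simp [Set.InjOn, pAA])) using 1
  rw [Finset.union_assoc, Finset.union_self, Finset.insert_union, Finset.singleton_union]

theorem resStep_E1 (hn : 2 ≤ n) :
    ResStep (pPrefix n) {(PV.a 1, true), (PV.a 2, true), (PV.y n, true)}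
      (insert (PV.y n, false) (pAA true)) (pAA true) := by
  have hE1 : ({(PV.a 1, true), (PV.a 2, true), (PV.y n, true)} : Clause PV) =
      insert (PV.y n, true) (pAA true) := by
    ext; simp [pAA]; tauto
  rw [hE1, ← Finset.union_self (pAA true)]
  exact resStep_insert (isExist_y hn le_rfl) (by simp [pAA]) (by simp [pAA])
    (not_tauto_of_injOn (by simp [Set.InjOn, pAA]))

theorem uRed_a1 : URed (pPrefix n) (pAA true) {(PV.a 2, true)} :=
  uRed_insert (isUniv_a (Or.inl rfl)) (by simp) (by simp [negLit])
    (by simpa using not_isExist_a 2)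

theorem uRed_a2 : URed (pPrefix n) {(PV.a 2, true)} ∅ := by
  rw [← Finset.insert_empty]
  exact uRed_insert (isUniv_a (Or.inr rfl)) (by simp) (by simp) (by simp)

theorem exists_stepsOK_mem_yBar {j : ℕ} (hj : 2 ≤ j) (hjn : j ≤ n) :
    ∃ L, StepsOK (pPrefix n) (quparity n ∪ pPsi n) L ∧ L.length = 2 * j - 2 ∧
      insert (PV.y j, false) (pAA true) ∈ L := by
  induction j, hj using Nat.le_induction with
  | base =>
    refine ⟨[] ++ [insert (PV.x 2, true) (insert (PV.y 2, false) (pAA true))] ++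
      [insert (PV.y 2, false) (pAA true)], ?_, rfl, by simp⟩
    exact (stepsOK_nil.snoc_res (Or.inl (Finset.mem_union_left _ mem_quparity_D2))
      (Or.inl (Finset.mem_union_right _ mem_pPsi_x1)) (resStep_D2 hjn)).snoc_res
      (Or.inr (by simp)) (Or.inl (Finset.mem_union_right _ (mem_pPsi_x le_rfl hjn)))
      (resStep_psi_x (by omega) hjn)
  | succ j hj ih =>
    obtain ⟨L, hL, hlen, hG⟩ := ih (by omega)
    refine ⟨L ++ [insert (PV.x (j + 1), true) (insert (PV.y (j + 1), false) (pAA true))] ++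
      [insert (PV.y (j + 1), false) (pAA true)], ?_, by simp; omega, by simp⟩
    exact (hL.snoc_res (Or.inl (Finset.mem_union_left _ (mem_quparity_D hj hjn))) (Or.inr hG)
      (resStep_D hj hjn)).snoc_res (Or.inr (by simp))
      (Or.inl (Finset.mem_union_right _ (mem_pPsi_x (by omega) hjn)))
      (resStep_psi_x (by omega) hjn)

end Quparity

/-- QUPARITY_n with symmetry breaker ψₙ has a Q-Res refutation of
at most 2n+1 R/U steps. -/
theorem quparity_breaker_short_refutation : ∀ n : ℕ, 2 ≤ n →
    ∃ D : List (Clause PV),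
      IsRefutation (pPrefix n) (quparity n ∪ pPsi n) D ∧ D.length ≤ 2 * n + 1 := by
  intro n hn
  obtain ⟨L, hL, hlen, hG⟩ := exists_stepsOK_mem_yBar hn le_rfl
  refine ⟨L ++ [pAA true] ++ [{(PV.a 2, true)}] ++ [∅], ⟨?_, by simp⟩, by simp; omega⟩
  exact ((hL.snoc_res (Or.inl (Finset.mem_union_left _ mem_quparity_E1)) (Or.inr hG)
    (resStep_E1 hn)).snoc_uRed (Or.inr (by simp)) uRed_a1).snoc_uRed (Or.inr (by simp)) uRed_a2
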